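/- arXiv:2108.03610 — 2 statements merged into one kernel-verified Lean document; each statement's English description precedes it below -/
import Mathlib

section
/- Let X be a topological space and x ∈ X. The following statements are equivalent: (1) X is homotopically path Hausdorff relative to the trivial subgroup of π₁(X, x); (2) π₁^qs(X, x) = 1; (3) for every loop f at x and every loop g at x, if f is homotopically close to g rel ∂I, then [f] = [g]; (4) for every loop f at x and loops g₁, g₂ at x, if f is homotopically close to g₁ rel ∂I and f is homotopically close to g₂ rel ∂I, then [g₁] = [g₂]. -/
open unitInterval

noncomputable section

attribute [local instance] Path.Homotopic.setoid

variable {X Y : Type*} [TopologicalSpace X] [TopologicalSpace Y]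

/-- `HClose f g` : the path `f` is homotopically close to the path `g` rel `∂I`:
for every partition `0 = t₀ < t₁ < ⋯ < tₙ = 1` and every sequence of open sets
`U₁, …, Uₙ` with `g [tᵢ₋₁, tᵢ] ⊆ Uᵢ`, there is a path `γ`, homotopic to `f` rel `∂I`,
with `γ [tᵢ₋₁, tᵢ] ⊆ Uᵢ` and `γ tᵢ = g tᵢ` for all `i`. -/
def HClose {a b : X} (f g : Path a b) : Prop :=
  ∀ (n : ℕ) (t : Fin (n + 1) → I), t 0 = 0 → t (Fin.last n) = 1 → StrictMono t →
    ∀ U : Fin n → Set X, (∀ i, IsOpen (U i)) →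
      (∀ i : Fin n, g '' Set.Icc (t i.castSucc) (t i.succ) ⊆ U i) →
      ∃ γ : Path a b,
        (∀ i : Fin n, γ '' Set.Icc (t i.castSucc) (t i.succ) ⊆ U i) ∧
        (∀ i : Fin (n + 1), γ (t i) = g (t i)) ∧ γ.Homotopic f

/-- The class of a loop at `x` as an element of the fundamental group. -/
def pathClass {x : X} (f : Path x x) : FundamentalGroup X x :=
  FundamentalGroup.fromPath (⟦f⟧ : Path.Homotopic.Quotient x x)

/-- The `H`-quasi-small loop set `π_H^qs(X, x)`. -/
def qsSet (x : X) (H : Set (FundamentalGroup X x)) : Set (FundamentalGroup X x) :=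
  { p | ∃ f h : Path x x, pathClass f = p ∧ pathClass h ∈ H ∧ HClose f h }

/-- The quasi-small loop group `π₁^qs(X, x)`. -/
def qs (x : X) : Set (FundamentalGroup X x) :=
  qsSet x (⊥ : Subgroup (FundamentalGroup X x))

/-- The Spanier group of `(X, x)` with respect to the cover `𝒰`. -/
def spanierCover (x : X) (𝒰 : Set (Set X)) : Subgroup (FundamentalGroup X x) :=
  Subgroup.closure { p | ∃ (y : X) (u : Path x y) (v : Path y y) (U : Set X),
    U ∈ 𝒰 ∧ Set.range v ⊆ U ∧ p = pathClass ((u.trans v).trans u.symm) }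

/-- The (unbased) Spanier group `π₁^sp(X, x)`. -/
def spanierGroup (x : X) : Subgroup (FundamentalGroup X x) :=
  ⨅ (𝒰 : Set (Set X)) (_ : ∀ U ∈ 𝒰, IsOpen U) (_ : ⋃₀ 𝒰 = Set.univ), spanierCover x 𝒰

/-- The small generated subgroup `π₁^sg(X, x)`. -/
def smallGenerated (x : X) : Subgroup (FundamentalGroup X x) :=
  Subgroup.closure { p | ∃ (y : X) (β : Path x y) (α : Path y y),
    HClose α (Path.refl y) ∧ p = pathClass ((β.trans α).trans β.symm) }

/-- `X` is homotopically path Hausdorff relative to `H ⊆ π₁(X, x)`. -/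
def HPHausdorffRel (x : X) (H : Set (FundamentalGroup X x)) : Prop :=
  ∀ (y : X) (α β : Path x y), pathClass (α.trans β.symm) ∉ H →
    ∃ (n : ℕ) (t : Fin (n + 1) → I), t 0 = 0 ∧ t (Fin.last n) = 1 ∧ StrictMono t ∧
      ∃ U : Fin n → Set X, (∀ i, IsOpen (U i)) ∧
        (∀ i : Fin n, α '' Set.Icc (t i.castSucc) (t i.succ) ⊆ U i) ∧
        ∀ γ : Path x y, (∀ i : Fin n, γ '' Set.Icc (t i.castSucc) (t i.succ) ⊆ U i) →
          (∀ i : Fin (n + 1), γ (t i) = α (t i)) → pathClass (γ.trans β.symm) ∉ H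

/-! All four conditions amount to: a path from `x` that is homotopically close to another is
homotopic to it. For (1) this is an unwinding of definitions: the tube around `α` that (1) provides
is exactly what closeness fills with a path homotopic to `β`. From (2) one passes from `f` close to
`g` to `f * g⁻¹` close to the null-homotopic `g * g⁻¹`. This needs closeness to be stable under right
concatenation, and a tube around `g * h` does restrict, after doubling the parameter on `[0, 1/2]`,
to a tube around `g`. -/

lemma pathClass_mem_bot_iff {x : X} (f : Path x x) :
    pathClass f ∈ ((⊥ : Subgroup (FundamentalGroup X x)) : Set (FundamentalGroup X x)) ↔
      f.Homotopic (Path.refl x) :=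
  SetLike.mem_coe.trans <| Subgroup.mem_bot.trans Quotient.eq

lemma pathClass_trans_symm_mem_bot_iff {x y : X} (f g : Path x y) :
    pathClass (f.trans g.symm) ∈
        ((⊥ : Subgroup (FundamentalGroup X x)) : Set (FundamentalGroup X x)) ↔
      f.Homotopic g := by
  rw [pathClass_mem_bot_iff, ← Path.Homotopic.Quotient.eq, ← Path.Homotopic.Quotient.eq,
    Path.Homotopic.Quotient.mk_trans, Path.Homotopic.Quotient.mk_symm,
    Path.Homotopic.Quotient.mk_refl]
  constructor
  · intro h
    simpa using congrArg (·.trans (Path.Homotopic.Quotient.mk g)) h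
  · intro h
    rw [h, Path.Homotopic.Quotient.trans_symm]

lemma Fin.exists_castSucc_lt_le_succ {α : Type*} [LinearOrder α] {n : ℕ} (t : Fin (n + 1) → α)
    {a : α} (h0 : t 0 < a) (hlast : a ≤ t (Fin.last n)) :
    ∃ i : Fin n, t i.castSucc < a ∧ a ≤ t i.succ := by
  induction n with
  | zero => exact absurd (h0.trans_le hlast) (lt_irrefl _)
  | succ n ih =>
    by_cases hn : a ≤ t (Fin.last n).castSucc
    · obtain ⟨i, hi⟩ := ih (t ∘ Fin.castSucc) h0 hn
      exact ⟨i.castSucc, hi⟩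
    · exact ⟨Fin.last n, lt_of_not_ge hn, hlast⟩

namespace unitInterval

def doubleClamp (u : I) : I := Set.projIcc 0 1 zero_le_one (2 * u)

lemma monotone_doubleClamp : Monotone doubleClamp := fun _ _ h =>
  Set.monotone_projIcc _ (by gcongr)

lemma coe_doubleClamp_of_le_half {u : I} (hu : (u : ℝ) ≤ 1 / 2) :
    (doubleClamp u : ℝ) = 2 * u := by
  rw [doubleClamp, Set.projIcc_of_mem _ ⟨by linarith [u.2.1], by linarith⟩]

lemma coe_doubleClamp_le (u : I) : (doubleClamp u : ℝ) ≤ 2 * u := by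
  rcases le_total (u : ℝ) (1 / 2) with hu | hu
  · exact (coe_doubleClamp_of_le_half hu).le
  · calc (doubleClamp u : ℝ) ≤ 1 := (doubleClamp u).2.2
      _ ≤ 2 * u := by linarith

lemma doubleClamp_of_half_le {u : I} (hu : 1 / 2 ≤ (u : ℝ)) : doubleClamp u = 1 := by
  rw [doubleClamp, Set.projIcc_of_right_le _ (by linarith)]
  rfl

lemma doubleClamp_lt_doubleClamp {u v : I} (huv : u < v) (hu : (u : ℝ) < 1 / 2) :
    doubleClamp u < doubleClamp v := by
  rw [← Subtype.coe_lt_coe, coe_doubleClamp_of_le_half hu.le]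
  rcases le_total (v : ℝ) (1 / 2) with hv | hv
  · rw [coe_doubleClamp_of_le_half hv]
    exact mul_lt_mul_of_pos_left huv two_pos
  · rw [doubleClamp_of_half_le hv, Set.Icc.coe_one]
    linarith

end unitInterval

open unitInterval

lemma Path.trans_apply_of_le_half {a b c : X} (f : Path a b) (h : Path b c) {u : I}
    (hu : (u : ℝ) ≤ 1 / 2) : f.trans h u = f (doubleClamp u) := by
  rw [Path.trans_apply, dif_pos hu]
  congr 1
  exact Subtype.ext (coe_doubleClamp_of_le_half hu).symm

lemma Path.trans_apply_eq_of_half_le {a b c : X} (f g : Path a b) (h : Path b c) {u : I}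
    (hu : 1 / 2 ≤ (u : ℝ)) : f.trans h u = g.trans h u := by
  rcases hu.eq_or_lt with hu | hu
  · rw [Path.trans_apply_of_le_half _ _ hu.ge, Path.trans_apply_of_le_half _ _ hu.ge,
      doubleClamp_of_half_le hu.le, Path.target, Path.target]
  · rw [Path.trans_apply, Path.trans_apply, dif_neg hu.not_ge, dif_neg hu.not_ge]

lemma Path.image_doubleClamp_Icc_subset_image_trans {a b c : X} (f : Path a b) (h : Path b c)
    {u v : I} (hu : (u : ℝ) ≤ 1 / 2) :
    f '' Set.Icc (doubleClamp u) (doubleClamp v) ⊆ f.trans h '' Set.Icc u v := by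
  rintro _ ⟨w, ⟨huw, hwv⟩, rfl⟩
  have hw : (w : ℝ) / 2 ∈ I := ⟨by linarith [w.2.1], by linarith [w.2.2]⟩
  refine ⟨⟨w / 2, hw⟩, ⟨?_, ?_⟩, ?_⟩
  · have := coe_doubleClamp_of_le_half hu ▸ Subtype.coe_le_coe.mpr huw
    change (u : ℝ) ≤ w / 2
    linarith
  · have := (Subtype.coe_le_coe.mpr hwv).trans (coe_doubleClamp_le v)
    change (w : ℝ) / 2 ≤ v
    linarith
  · rw [Path.trans_apply_of_le_half _ _ (show (w : ℝ) / 2 ≤ 1 / 2 by linarith [w.2.2])]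
    congr 1
    exact Subtype.ext (by rw [coe_doubleClamp_of_le_half (by linarith [w.2.2])]; ring)

lemma HClose.refl {a b : X} (f : Path a b) : HClose f f :=
  fun _ _ _ _ _ _ _ hf => ⟨f, hf, fun _ => rfl, .refl f⟩

lemma HClose.trans_right {a b c : X} {f g : Path a b} (hfg : HClose f g) (h : Path b c) :
    HClose (f.trans h) (g.trans h) := by
  intro n t h0 h1 hmono U hU hsub
  -- `[t c, t (c + 1)]` is the interval containing `1/2`; doubled, the intervals up to it
  -- partition `I` for `g`.
  obtain ⟨c, hc, hc'⟩ := Fin.exists_castSucc_lt_le_succ (fun i => (t i : ℝ)) (a := 1 / 2)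
    (by simp [h0]) (by norm_num [h1])
  let k : ℕ := c.val
  have hkn : k + 2 ≤ n + 1 := by omega
  have hlow : ∀ i : Fin (n + 1), (i : ℕ) ≤ k → (t i : ℝ) < 1 / 2 := fun i hi =>
    lt_of_le_of_lt (hmono.monotone (Fin.le_def.mpr hi)) hc
  have hidx : ∀ i : Fin (n + 1), (t i : ℝ) < 1 / 2 → (i : ℕ) ≤ k := fun i hi =>
    Nat.lt_succ_iff.mp (hmono.lt_iff_lt.mp (Subtype.coe_lt_coe.mp (hi.trans_le hc')))
  let s : Fin (k + 2) → I := fun j => doubleClamp (t (Fin.castLE hkn j))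
  have hs0 : s 0 = 0 := by
    simp only [s, Fin.castLE_zero, h0]
    exact Subtype.ext (by simp [coe_doubleClamp_of_le_half])
  have hs1 : s (Fin.last _) = 1 := by
    refine doubleClamp_of_half_le ?_
    rwa [show Fin.castLE hkn (Fin.last _) = c.succ from Fin.ext (by simp [k])]
  have hs : StrictMono s := fun j j' hjj' =>
    doubleClamp_lt_doubleClamp (hmono hjj') (hlow _ (by simp; omega))
  let V : Fin (k + 1) → Set X := fun j => U (Fin.castLE (by omega) j)
  have hgV : ∀ j, g '' Set.Icc (s j.castSucc) (s j.succ) ⊆ V j := fun j =>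
    (g.image_doubleClamp_Icc_subset_image_trans h
      (hlow _ (by simpa using Nat.lt_succ_iff.mp j.isLt)).le).trans (hsub (Fin.castLE _ j))
  obtain ⟨γ, hγV, hγg, hγf⟩ := hfg (k + 1) s hs0 hs1 hs V (fun j => hU _) hgV
  refine ⟨γ.trans h, ?_, fun i => ?_, hγf.hcomp (Path.Homotopic.refl h)⟩
  · rintro i _ ⟨u, hu, rfl⟩
    by_cases hu2 : 1 / 2 ≤ (u : ℝ)
    · rw [γ.trans_apply_eq_of_half_le g h hu2]
      exact hsub i ⟨u, hu, rfl⟩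
    · push Not at hu2
      have hik := hidx i.castSucc (lt_of_le_of_lt hu.1 hu2)
      rw [γ.trans_apply_of_le_half h hu2.le]
      exact hγV ⟨i, by simpa using hik⟩
        ⟨_, ⟨monotone_doubleClamp hu.1, monotone_doubleClamp hu.2⟩, rfl⟩
  · by_cases hi : 1 / 2 ≤ (t i : ℝ)
    · exact γ.trans_apply_eq_of_half_le g h hi
    · push Not at hi
      rw [γ.trans_apply_of_le_half h hi.le, g.trans_apply_of_le_half h hi.le]
      exact hγg ⟨i, by have := hidx i hi; omega⟩

lemma hPHausdorffRel_bot_iff (x : X) :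
    HPHausdorffRel x ((⊥ : Subgroup (FundamentalGroup X x)) : Set (FundamentalGroup X x)) ↔
      ∀ (y : X) (f g : Path x y), HClose f g → f.Homotopic g := by
  constructor
  · intro hX y f g hfg
    by_contra hne
    obtain ⟨n, t, h0, h1, hmono, U, hU, hgU, hγ⟩ :=
      hX y g f (mt (pathClass_trans_symm_mem_bot_iff g f).mp fun h => hne h.symm)
    obtain ⟨γ, hγU, hγg, hγf⟩ := hfg n t h0 h1 hmono U hU hgU
    exact hγ γ hγU hγg ((pathClass_trans_symm_mem_bot_iff γ f).mpr hγf)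
  · intro hX y α β hαβ
    by_contra hcon
    push Not at hcon
    refine hαβ ((pathClass_trans_symm_mem_bot_iff α β).mpr (hX y β α ?_).symm)
    intro n t h0 h1 hmono U hU hαU
    obtain ⟨γ, hγU, hγα, hγβ⟩ := hcon n t h0 h1 hmono U hU hαU
    exact ⟨γ, hγU, hγα, (pathClass_trans_symm_mem_bot_iff γ β).mp hγβ⟩

lemma HClose.homotopic_of_qs_eq_singleton_one {x y : X} {f g : Path x y} (hfg : HClose f g)
    (hqs : qs x = {1}) : f.Homotopic g := by
  have hmem : pathClass (f.trans g.symm) ∈ qs x :=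
    ⟨_, g.trans g.symm, rfl, (pathClass_trans_symm_mem_bot_iff g g).mpr (.refl g),
      hfg.trans_right g.symm⟩
  rw [hqs] at hmem
  exact (pathClass_trans_symm_mem_bot_iff f g).mp (Subgroup.mem_bot.mpr hmem)

lemma qs_eq_singleton_one_of_hClose_imp_homotopic {x : X}
    (hX : ∀ f g : Path x x, HClose f g → f.Homotopic g) : qs x = {1} := by
  ext p
  constructor
  · rintro ⟨f, h, rfl, hh, hfh⟩
    exact Quotient.sound ((hX f h hfh).trans ((pathClass_mem_bot_iff h).mp hh))
  · rintro rfl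
    exact ⟨.refl x, .refl x, rfl, Subgroup.one_mem _, .refl _⟩

/-- the following are equivalent: (1) `X` is homotopically path
Hausdorff relative to the trivial subgroup; (2) `π₁^qs(X, x) = 1`; (3) any loop at
`x` homotopically close to a loop `g` is homotopic to `g`; (4) if a loop at `x` is
homotopically close to two loops `g₁, g₂`, then `[g₁] = [g₂]`. -/
theorem stmt17 (x : X) :
    (HPHausdorffRel x ((⊥ : Subgroup (FundamentalGroup X x)) : Set (FundamentalGroup X x)) ↔
      qs x = {(1 : FundamentalGroup X x)}) ∧
    (qs x = {(1 : FundamentalGroup X x)} ↔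
      ∀ f g : Path x x, HClose f g → f.Homotopic g) ∧
    ((∀ f g : Path x x, HClose f g → f.Homotopic g) ↔
      ∀ f g₁ g₂ : Path x x, HClose f g₁ → HClose f g₂ → g₁.Homotopic g₂) := by
  have hqs : qs x = {1} ↔ ∀ (y : X) (f g : Path x y), HClose f g → f.Homotopic g :=
    ⟨fun hqs _ _ _ hfg => hfg.homotopic_of_qs_eq_singleton_one hqs,
      fun hX => qs_eq_singleton_one_of_hClose_imp_homotopic (hX x)⟩
  refine ⟨(hPHausdorffRel_bot_iff x).trans hqs.symm,
    ⟨fun h => hqs.mp h x, qs_eq_singleton_one_of_hClose_imp_homotopic⟩, ⟨?_, ?_⟩⟩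
  · exact fun hX f g₁ g₂ h₁ h₂ => (hX f g₁ h₁).symm.trans (hX f g₂ h₂)
  · exact fun hX f g hfg => hX f f g (.refl f) hfg
end
end

section
/- Let X be a locally path-connected topological space and let f, g be paths in X with f(0) = g(0) and f(1) = g(1). Suppose that for every partition 0 = t₀ < t₁ < ⋯ < t_n = 1 and every sequence of open sets U₁, …, U_n with g([t_{i-1}, t_i]) ⊆ U_i for all i, there exists a path f' homotopic to f rel ∂I with f'([t_{i-1}, t_i]) ⊆ U_i for 1 ≤ i ≤ n. Then f is homotopically close to g rel ∂I (i.e., one can additionally require the approximating path γ to satisfy γ(t_i) = g(t_i) for 0 ≤ i ≤ n). -/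
open unitInterval

noncomputable section

attribute [local instance] Path.Homotopic.setoid

variable {X Y : Type*} [TopologicalSpace X] [TopologicalSpace Y]

open Set Topology

/-!
A path `f'` as in the hypothesis already runs through the open sets `Uᵢ`, but need not pass
through the points `g tₖ`. Refining the partition just after each `tₖ` forces `f' tₖ` into the
path component of `Uₖ₋₁ ∩ Uₖ` containing `g tₖ`, which is open by local path-connectedness. A
path `δ` in this component from `f' tₖ` to `g tₖ` is then spliced into `f'` at time `tₖ` as a
detour `δ δ⁻¹`; this changes neither the homotopy class nor the containments `f' [tᵢ, tᵢ₊₁] ⊆ Uᵢ`.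
-/

theorem exists_mem_Ioo_image_Icc_subset {α : Type*} [LinearOrder α] [TopologicalSpace α]
    [OrderTopology α] [DenselyOrdered α] {φ : α → X} {s s' : α} (hφ : ContinuousAt φ s)
    (hss' : s < s') {W : Set X} (hW : W ∈ 𝓝 (φ s)) : ∃ m ∈ Ioo s s', φ '' Icc s m ⊆ W := by
  obtain ⟨u, hu, hsub⟩ :=
    (mem_nhdsGE_iff_exists_mem_Ioc_Ico_subset hss').1 (nhdsWithin_le_nhds (hφ hW))
  obtain ⟨m, hsm, hmu⟩ := exists_between hu.1
  exact ⟨m, ⟨hsm, hmu.trans_le hu.2⟩, image_subset_iff.2 ((Icc_subset_Ico_right hmu).trans hsub)⟩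

-- Partitions are indexed by `ℕ` to avoid `Fin` casts; only `t 0, …, t n` matter.
structure IsIntervalPartition (n : ℕ) (t : ℕ → I) : Prop where
  zero : t 0 = 0
  last : t n = 1
  lt_succ : ∀ i < n, t i < t (i + 1)

theorem IsIntervalPartition.apply_le_apply {n : ℕ} {t : ℕ → I} (ht : IsIntervalPartition n t)
    {i j : ℕ} (hij : i ≤ j) (hj : j ≤ n) : t i ≤ t j := by
  have : MonotoneOn t (Iic n) := monotoneOn_of_le_succ ordConnected_Iic fun k _ _ hk =>
    (ht.lt_succ k (Order.succ_le_iff.1 hk)).le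
  exact this (hij.trans hj) hj hij

def interleave {α : Type*} (u v : ℕ → α) (j : ℕ) : α := if Even j then u (j / 2) else v (j / 2)

section interleave

variable {α : Type*} (u v : ℕ → α) (k : ℕ)

@[simp]
theorem interleave_two_mul : interleave u v (2 * k) = u k := by
  simp [interleave]

@[simp]
theorem interleave_two_mul_add_one : interleave u v (2 * k + 1) = v k := by
  rw [interleave, if_neg (Nat.not_even_two_mul_add_one k)]
  congr
  omega

@[simp]
theorem interleave_two_mul_add_two : interleave u v (2 * k + 2) = u (k + 1) := by
  simpa [mul_add] using interleave_two_mul u v (k + 1)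

end interleave

namespace Path

variable {a b c : X}

theorem exists_homotopic_detour_of_bump (γ : Path a b) {u : I} (δ : Path (γ u) c) {κ : I → ℝ}
    (hκ : Continuous κ) (hκ0 : κ 0 ≤ 0) (hκ1 : κ 1 ≤ 0) (hκu : κ u = 2) :
    ∃ γ' : Path a b, γ'.Homotopic γ ∧ γ' u = c ∧ (∀ s, κ s ≤ 0 → γ' s = γ s) ∧
      ∀ s, γ' s ∈ range δ ∨ γ' s ∈ γ '' uIcc s u := by
  let μ : I → ℝ := fun s => projIcc (0 : ℝ) 1 zero_le_one (κ s)
  have hμ : ∀ s, μ s ∈ Icc (0 : ℝ) 1 := fun s => (projIcc _ _ _ _).2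
  -- `φ` pulls every time towards `u`, and collapses the plateau `{κ ≥ 1}` onto `u`
  let φ : I → I := fun s =>
    ⟨s + μ s • ((u : ℝ) - s), (convex_Icc 0 1).add_smul_sub_mem s.2 u.2 (hμ s)⟩
  have hφ_cont : Continuous φ := by
    have : Continuous μ := continuous_subtype_val.comp (continuous_projIcc.comp hκ)
    exact Continuous.subtype_mk (by fun_prop) _
  have hφ_of_nonpos : ∀ s, κ s ≤ 0 → φ s = s := fun s hs =>
    Subtype.ext (by simp [φ, μ, projIcc_of_le_left _ hs])
  have hφ_of_one_le : ∀ s, 1 ≤ κ s → φ s = u := fun s hs =>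
    Subtype.ext (by simp [φ, μ, projIcc_of_right_le _ hs])
  have hφ_mem : ∀ s, φ s ∈ uIcc s u := fun s => by
    have : (φ s : ℝ) ∈ uIcc (s : ℝ) u :=
      convex_uIcc (s : ℝ) u |>.add_smul_sub_mem left_mem_uIcc right_mem_uIcc (hμ s)
    simpa [mem_uIcc, ← Subtype.coe_le_coe] using this
  have hφ0 : φ 0 = 0 := hφ_of_nonpos 0 hκ0
  have hφ1 : φ 1 = 1 := hφ_of_nonpos 1 hκ1
  -- at time `τ`, the plateau runs out along `δ` up to `δ τ` and back
  let H : I × I → X := fun p => if 1 ≤ κ p.2 then δ.extend (p.1 * (κ p.2 - 1)) else γ (φ p.2)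
  have hH : Continuous H := by
    refine Continuous.if_le (by fun_prop) (γ.continuous.comp (hφ_cont.comp continuous_snd))
      continuous_const (hκ.comp continuous_snd) fun p hp => ?_
    simp [← hp, hφ_of_one_le p.2 hp.le]
  have hH_of_lt : ∀ τ s, κ s < 1 → H (τ, s) = γ (φ s) := fun τ s hs => if_neg (not_le.2 hs)
  let γ' : Path a b :=
    { toFun := fun s => H (1, s)
      continuous_toFun := hH.comp (by fun_prop)
      source' := by simp [hH_of_lt 1 0 (by linarith), hφ0]
      target' := by simp [hH_of_lt 1 1 (by linarith), hφ1] }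
  let F : Homotopy (γ.reparam φ hφ_cont hφ0 hφ1) γ' :=
    { toFun := H
      continuous_toFun := hH
      map_zero_left := fun s => by
        by_cases hs : 1 ≤ κ s
        · simp [H, hs, hφ_of_one_le s hs]
        · exact hH_of_lt 0 s (not_le.1 hs)
      map_one_left := fun s => rfl
      prop' := by
        rintro τ s (rfl | rfl)
        · simp [hH_of_lt τ 0 (by linarith), hφ0]
        · simp [hH_of_lt τ 1 (by linarith), hφ1] }
  refine ⟨γ', (Homotopic.symm ⟨F⟩).trans (Homotopic.symm ⟨Homotopy.reparam γ φ hφ_cont hφ0 hφ1⟩),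
    ?_, fun s hs => ?_, fun s => ?_⟩
  · norm_num [γ', H, hκu]
  · simp [γ', hH_of_lt 1 s (by linarith), hφ_of_nonpos s hs]
  · by_cases hs : 1 ≤ κ s
    · left
      rw [← extend_range]
      exact ⟨_, (if_pos hs).symm⟩
    · exact Or.inr ⟨φ s, hφ_mem s, (hH_of_lt 1 s (not_le.1 hs)).symm⟩

theorem exists_homotopic_detour (γ : Path a b) {l u r : I} (hlu : l < u) (hur : u < r)
    (δ : Path (γ u) c) :
    ∃ γ' : Path a b, γ'.Homotopic γ ∧ γ' u = c ∧ (∀ s, s ≤ l ∨ r ≤ s → γ' s = γ s) ∧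
      ∀ s, γ' s ∈ range δ ∨ γ' s ∈ γ '' uIcc s u := by
  have hlu' : (0 : ℝ) < u - l := sub_pos.2 hlu
  have hur' : (0 : ℝ) < r - u := sub_pos.2 hur
  let κ : I → ℝ := fun s => 2 * min (((s : ℝ) - l) / (u - l)) ((r - s) / (r - u))
  have hκ : ∀ s, s ≤ l ∨ r ≤ s → κ s ≤ 0 := by
    rintro s (hs | hs)
    · exact mul_nonpos_of_nonneg_of_nonpos zero_le_two <| (min_le_left _ _).trans <|
        div_nonpos_of_nonpos_of_nonneg (sub_nonpos.2 hs) hlu'.le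
    · exact mul_nonpos_of_nonneg_of_nonpos zero_le_two <| (min_le_right _ _).trans <|
        div_nonpos_of_nonpos_of_nonneg (sub_nonpos.2 hs) hur'.le
  obtain ⟨γ', hγ', hu, hfix, hmem⟩ := γ.exists_homotopic_detour_of_bump δ (κ := κ) (by fun_prop)
    (hκ 0 (Or.inl nonneg')) (hκ 1 (Or.inr le_one'))
    (by simp [κ, div_self hlu'.ne', div_self hur'.ne'])
  exact ⟨γ', hγ', hu, fun s hs => hfix s (hκ s hs), hmem⟩

def IsSubordinate (γ : Path a b) (n : ℕ) (t : ℕ → I) (U : ℕ → Set X) : Prop :=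
  ∀ i < n, γ '' Icc (t i) (t (i + 1)) ⊆ U i

-- The hypothesis of the theorem (closeness in the sense of Virk), for `ℕ`-indexed partitions.
def VirkClose (f g : Path a b) : Prop :=
  ∀ (n : ℕ) (t : ℕ → I) (U : ℕ → Set X), IsIntervalPartition n t → (∀ i, IsOpen (U i)) →
    g.IsSubordinate n t U → ∃ f' : Path a b, f'.Homotopic f ∧ f'.IsSubordinate n t U

section Subordinate

variable {n : ℕ} {t : ℕ → I} {U : ℕ → Set X}

theorem IsSubordinate.exists_homotopic_eq_at {γ : Path a b} (ht : IsIntervalPartition n t)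
    (hγ : γ.IsSubordinate n t U) {k : ℕ} (hk0 : 0 < k) (hkn : k < n) {x : X}
    (δ : Path (γ (t k)) x) (hδ : range δ ⊆ U (k - 1) ∩ U k) :
    ∃ γ' : Path a b, γ'.Homotopic γ ∧ γ'.IsSubordinate n t U ∧ γ' (t k) = x ∧
      ∀ j ≤ n, j ≠ k → γ' (t j) = γ (t j) := by
  have hl : t (k - 1) < t k := by
    simpa [Nat.sub_add_cancel hk0] using ht.lt_succ (k - 1) (by omega)
  obtain ⟨γ', hγ', hγ'k, hfix, hmem⟩ := γ.exists_homotopic_detour hl (ht.lt_succ k hkn) δ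
  have hfar : ∀ j ≤ n, j ≠ k → t j ≤ t (k - 1) ∨ t (k + 1) ≤ t j := fun j hj hjk => by
    rcases lt_or_gt_of_ne hjk with h | h
    · exact Or.inl (ht.apply_le_apply (by omega) (by omega))
    · exact Or.inr (ht.apply_le_apply (by omega) hj)
  refine ⟨γ', hγ', fun i hi => ?_, hγ'k, fun j hj hjk => hfix _ (hfar j hj hjk)⟩
  rintro _ ⟨s, hs, rfl⟩
  by_cases hik : i + 1 = k ∨ i = k
  · have htk : t k ∈ Icc (t i) (t (i + 1)) := by
      rcases hik with rfl | rfl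
      · exact right_mem_Icc.2 (ht.lt_succ i hi).le
      · exact left_mem_Icc.2 (ht.lt_succ i hi).le
    have hδi : U (k - 1) ∩ U k ⊆ U i := by
      rcases hik with rfl | rfl
      · simp
      · exact inter_subset_right
    rcases hmem s with hδs | ⟨s', hs', hs'eq⟩
    · exact hδi (hδ hδs)
    · exact hs'eq ▸ hγ i hi ⟨s', uIcc_subset_Icc hs htk hs', rfl⟩
  · have : s ≤ t (k - 1) ∨ t (k + 1) ≤ s := by
      rcases Nat.lt_or_gt_of_ne (show i + 1 ≠ k by omega) with h | h
      · exact Or.inl (hs.2.trans (ht.apply_le_apply (by omega) (by omega)))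
      · exact Or.inr ((ht.apply_le_apply (by omega) hi.le).trans hs.1)
    exact hfix s this ▸ hγ i hi ⟨s, hs, rfl⟩

theorem IsSubordinate.exists_homotopic_eq_of_mem_pathComponentIn {γ : Path a b}
    (ht : IsIntervalPartition n t) (hγ : γ.IsSubordinate n t U) {x : ℕ → X}
    (hx : ∀ k, 0 < k → k < n → γ (t k) ∈ pathComponentIn (U (k - 1) ∩ U k) (x k)) :
    ∃ γ' : Path a b, γ'.Homotopic γ ∧ γ'.IsSubordinate n t U ∧
      ∀ k, 0 < k → k < n → γ' (t k) = x k := by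
  suffices ∀ m, ∃ γ' : Path a b, γ'.Homotopic γ ∧ γ'.IsSubordinate n t U ∧
      ∀ k, 0 < k → k < n → (k < m → γ' (t k) = x k) ∧ (m ≤ k → γ' (t k) = γ (t k)) by
    obtain ⟨γ', hγ', hsub, hpts⟩ := this n
    exact ⟨γ', hγ', hsub, fun k hk0 hkn => (hpts k hk0 hkn).1 hkn⟩
  intro m
  induction m with
  | zero => exact ⟨γ, .refl γ, hγ, fun k _ _ => ⟨fun h => absurd h k.not_lt_zero, fun _ => rfl⟩⟩
  | succ m ih =>
    obtain ⟨γ₁, hγ₁, hsub₁, hpts₁⟩ := ih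
    by_cases hm : 0 < m ∧ m < n
    · have hJ : JoinedIn (U (m - 1) ∩ U m) (x m) (γ₁ (t m)) :=
        (hpts₁ m hm.1 hm.2).2 le_rfl ▸ hx m hm.1 hm.2
      obtain ⟨γ₂, hγ₂, hsub₂, hγ₂m, hfix⟩ := hsub₁.exists_homotopic_eq_at ht hm.1 hm.2
        hJ.somePath.symm (range_subset_iff.2 fun s => hJ.somePath_mem _)
      refine ⟨γ₂, hγ₂.trans hγ₁, hsub₂, fun k hk0 hkn => ?_⟩
      rcases eq_or_ne k m with rfl | hkm
      · exact ⟨fun _ => hγ₂m, fun h => absurd h (by omega)⟩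
      · rw [hfix k hkn.le hkm]
        exact ⟨fun h => (hpts₁ k hk0 hkn).1 (by omega), fun h => (hpts₁ k hk0 hkn).2 (by omega)⟩
    · exact ⟨γ₁, hγ₁, hsub₁, fun k hk0 hkn =>
        ⟨fun h => (hpts₁ k hk0 hkn).1 (by omega), fun h => (hpts₁ k hk0 hkn).2 (by omega)⟩⟩

theorem VirkClose.exists_homotopic_subordinate_mem {f g : Path a b} (hfg : f.VirkClose g)
    (ht : IsIntervalPartition n t) (hU : ∀ i, IsOpen (U i)) (hg : g.IsSubordinate n t U)
    {W : ℕ → Set X} (hW : ∀ k, IsOpen (W k)) (hgW : ∀ k < n, g (t k) ∈ W k) :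
    ∃ f' : Path a b, f'.Homotopic f ∧ f'.IsSubordinate n t U ∧ ∀ k < n, f' (t k) ∈ W k := by
  have hm : ∀ k, ∃ m : I, k < n → m ∈ Ioo (t k) (t (k + 1)) ∧ g '' Icc (t k) m ⊆ W k := by
    intro k
    by_cases hk : k < n
    · obtain ⟨m, hm, hsub⟩ := exists_mem_Ioo_image_Icc_subset g.continuous.continuousAt
        (ht.lt_succ k hk) ((hW k).mem_nhds (hgW k hk))
      exact ⟨m, fun _ => ⟨hm, hsub⟩⟩
    · exact ⟨0, fun h => absurd h hk⟩
  choose m hm using hm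
  have hpart : IsIntervalPartition (2 * n) (interleave t m) := by
    refine ⟨(interleave_two_mul t m 0).trans ht.zero, by simpa using ht.last, fun j hj => ?_⟩
    obtain ⟨k, rfl | rfl⟩ := Nat.even_or_odd' j
    · simpa using (hm k (by omega)).1.1
    · simpa using (hm k (by omega)).1.2
  have hopen : ∀ j, IsOpen (interleave (fun k => U k ∩ W k) U j) := fun j => by
    unfold interleave
    split_ifs
    exacts [(hU _).inter (hW _), hU _]
  have hgsub : g.IsSubordinate (2 * n) (interleave t m) (interleave (fun k => U k ∩ W k) U) := by
    intro j hj
    obtain ⟨k, rfl | rfl⟩ := Nat.even_or_odd' j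
    · simp only [interleave_two_mul, interleave_two_mul_add_one]
      exact subset_inter
        ((image_mono (Icc_subset_Icc_right (hm k (by omega)).1.2.le)).trans (hg k (by omega)))
        (hm k (by omega)).2
    · simp only [interleave_two_mul_add_one, interleave_two_mul_add_two]
      exact (image_mono (Icc_subset_Icc_left (hm k (by omega)).1.1.le)).trans (hg k (by omega))
  obtain ⟨f', hf', hsub⟩ := hfg _ _ _ hpart hopen hgsub
  refine ⟨f', hf', fun k hk => ?_, fun k hk => ?_⟩
  · have h₁ := hsub (2 * k) (by omega)
    have h₂ := hsub (2 * k + 1) (by omega)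
    simp only [interleave_two_mul, interleave_two_mul_add_one, interleave_two_mul_add_two] at h₁ h₂
    rw [← Icc_union_Icc_eq_Icc (hm k hk).1.1.le (hm k hk).1.2.le, image_union]
    exact union_subset (h₁.trans inter_subset_left) h₂
  · have h₁ := hsub (2 * k) (by omega)
    simp only [interleave_two_mul, interleave_two_mul_add_one] at h₁
    exact (h₁ ⟨t k, left_mem_Icc.2 (hm k hk).1.1.le, rfl⟩).2

theorem VirkClose.exists_homotopic_subordinate_eq [LocallyPathConnectedSpace X] {f g : Path a b}
    (hfg : f.VirkClose g) (ht : IsIntervalPartition n t) (hU : ∀ i, IsOpen (U i))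
    (hg : g.IsSubordinate n t U) :
    ∃ γ : Path a b, γ.Homotopic f ∧ γ.IsSubordinate n t U ∧ ∀ k ≤ n, γ (t k) = g (t k) := by
  have hgU : ∀ k < n, g (t k) ∈ U (k - 1) ∩ U k := by
    intro k hk
    refine ⟨?_, hg k hk ⟨t k, left_mem_Icc.2 (ht.lt_succ k hk).le, rfl⟩⟩
    rcases k with _ | k
    · exact hg 0 hk ⟨t 0, left_mem_Icc.2 (ht.lt_succ 0 hk).le, rfl⟩
    · exact hg k (by omega) ⟨t (k + 1), right_mem_Icc.2 (ht.lt_succ k (by omega)).le, rfl⟩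
  obtain ⟨f', hf', hsub, hmem⟩ := hfg.exists_homotopic_subordinate_mem ht hU hg
    (fun k => ((hU _).inter (hU _)).pathComponentIn _)
    (fun k hk => mem_pathComponentIn_self (hgU k hk))
  obtain ⟨γ, hγ, hγsub, hγg⟩ :=
    hsub.exists_homotopic_eq_of_mem_pathComponentIn ht fun k _ hk => hmem k hk
  refine ⟨γ, hγ.trans hf', hγsub, fun k hk => ?_⟩
  rcases Nat.eq_zero_or_pos k with rfl | hk0
  · rw [ht.zero, γ.source, g.source]
  rcases hk.lt_or_eq with hkn | rfl
  · exact hγg k hk0 hkn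
  · rw [ht.last, γ.target, g.target]

theorem virkClose_of_forall_fin {f g : Path a b}
    (h : ∀ (n : ℕ) (t : Fin (n + 1) → I), t 0 = 0 → t (Fin.last n) = 1 → StrictMono t →
      ∀ U : Fin n → Set X, (∀ i, IsOpen (U i)) →
        (∀ i : Fin n, g '' Icc (t i.castSucc) (t i.succ) ⊆ U i) →
        ∃ f' : Path a b, f'.Homotopic f ∧ ∀ i : Fin n, f' '' Icc (t i.castSucc) (t i.succ) ⊆ U i) :
    f.VirkClose g := by
  intro n t U ht hU hg
  obtain ⟨f', hf', hsub⟩ := h n (fun i => t i) ht.zero ht.last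
    (Fin.strictMono_iff_lt_succ.2 fun i => ht.lt_succ i i.2) (fun i => U i) (fun i => hU i)
    fun i => hg i i.2
  exact ⟨f', hf', fun i hi => hsub ⟨i, hi⟩⟩

theorem hClose_of_forall_nat {f g : Path a b}
    (h : ∀ (n : ℕ) (t : ℕ → I) (U : ℕ → Set X), IsIntervalPartition n t → (∀ i, IsOpen (U i)) →
      g.IsSubordinate n t U → ∃ γ : Path a b, γ.Homotopic f ∧ γ.IsSubordinate n t U ∧
        ∀ k ≤ n, γ (t k) = g (t k)) :
    HClose f g := by
  intro n t ht0 htn hmono U hU hgU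
  let T : ℕ → I := fun k => t ⟨min k n, by omega⟩
  let V : ℕ → Set X := fun k => if hk : k < n then U ⟨k, hk⟩ else univ
  have hT : ∀ i : Fin (n + 1), T i = t i := fun i => congrArg t (Fin.ext (min_eq_left i.is_le))
  have hTcast : ∀ i : Fin n, T i = t i.castSucc := fun i => hT i.castSucc
  have hTsucc : ∀ i : Fin n, T (i + 1) = t i.succ := fun i => congrArg t (Fin.ext (by simp))
  have hV : ∀ i : Fin n, V i = U i := fun i => dif_pos i.2
  have hpart : IsIntervalPartition n T := by
    refine ⟨(hT 0).trans ht0, (hT (Fin.last n)).trans htn, fun i hi => ?_⟩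
    rw [hTcast ⟨i, hi⟩, hTsucc ⟨i, hi⟩]
    exact hmono Fin.castSucc_lt_succ
  have hVopen : ∀ k, IsOpen (V k) := fun k => by
    unfold V
    split_ifs
    exacts [hU _, isOpen_univ]
  have hgV : g.IsSubordinate n T V := fun i hi => by
    have := hgU ⟨i, hi⟩
    rwa [← hTcast, ← hTsucc, ← hV] at this
  obtain ⟨γ, hγf, hγV, hγg⟩ := h n T V hpart hVopen hgV
  refine ⟨γ, fun i => ?_, fun i => ?_, hγf⟩
  · have := hγV i i.2
    rwa [hTcast, hTsucc, hV] at this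
  · rw [← hT i]
    exact hγg i i.is_le

end Subordinate

end Path

/-- in a locally path-connected space, closeness in the sense of Virk
(without the requirement `γ (t i) = g (t i)`) implies homotopical closeness. -/
theorem stmt18 [LocallyPathConnectedSpace X] {a b : X} (f g : Path a b)
    (h : ∀ (n : ℕ) (t : Fin (n + 1) → I), t 0 = 0 → t (Fin.last n) = 1 → StrictMono t →
      ∀ U : Fin n → Set X, (∀ i, IsOpen (U i)) →
        (∀ i : Fin n, g '' Set.Icc (t i.castSucc) (t i.succ) ⊆ U i) →
        ∃ f' : Path a b, f'.Homotopic f ∧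
          ∀ i : Fin n, f' '' Set.Icc (t i.castSucc) (t i.succ) ⊆ U i) :
    HClose f g :=
  Path.hClose_of_forall_nat fun _ _ _ ht hU hg =>
    (Path.virkClose_of_forall_fin h).exists_homotopic_subordinate_eq ht hU hg
end
end
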